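/- arXiv:1412.6928 — 3 statements merged into one kernel-verified Lean document; each statement's English description precedes it below -/
import Mathlib

section
/- Let f and g be continuous self-maps of a compact metric space (X,d) that are topologically conjugate via a homeomorphism h with f = h ∘ g ∘ h⁻¹. If a pair (u,v) is distributionally scrambled of type 2½ for f, then (h⁻¹(u), h⁻¹(v)) is distributionally scrambled of type 2½ for g. In particular, f is DC2½ chaotic if and only if g is. -/
/-- The lower distribution function `Φ_{(x,y)}(δ)` of the pair `(x,y)` under `f`. -/
noncomputable def lowerDist {X : Type*} [MetricSpace X] (f : X → X) (x y : X) (δ : ℝ) : ℝ :=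
  Filter.liminf (fun m : ℕ =>
    (((Finset.range (m + 1)).filter (fun k => dist (f^[k] x) (f^[k] y) < δ)).card : ℝ) / m)
    Filter.atTop

/-- The upper distribution function `Φ*_{(x,y)}(δ)` of the pair `(x,y)` under `f`. -/
noncomputable def upperDist {X : Type*} [MetricSpace X] (f : X → X) (x y : X) (δ : ℝ) : ℝ :=
  Filter.limsup (fun m : ℕ =>
    (((Finset.range (m + 1)).filter (fun k => dist (f^[k] x) (f^[k] y) < δ)).card : ℝ) / m)
    Filter.atTop

/-- A pair `(x₁,x₂)` is distributionally scrambled of type 2½ for `f`. -/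
def DC2HalfPair {X : Type*} [MetricSpace X] (f : X → X) (x₁ x₂ : X) : Prop :=
  ∃ c s : ℝ, 0 < c ∧ 0 < s ∧ ∀ δ : ℝ, 0 < δ → δ < s →
    lowerDist f x₁ x₂ δ < c ∧ c < upperDist f x₁ x₂ δ

/-- `f` is DC2½ chaotic: it has an uncountable set whose distinct pairs are all
distributionally scrambled of type 2½. -/
def DC2HalfChaotic {X : Type*} [MetricSpace X] (f : X → X) : Prop :=
  ∃ S : Set X, ¬ S.Countable ∧ ∀ x ∈ S, ∀ y ∈ S, x ≠ y → DC2HalfPair f x y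

/-!
Uniform continuity of `h` and `h⁻¹` (automatic on a compact space) gives, for every `δ`, some
`ε` such that `ε`-closeness of the `f`-orbits of `u, v` at time `k` forces `δ`-closeness of the
`g`-orbits of `h⁻¹ u, h⁻¹ v` at the same time `k`, and vice versa. Hence the distribution
functions of the two pairs dominate each other up to a change of `δ`, which the constants
`c` and `s` in the definition of a DC2½ pair can absorb.
-/

open Filter Function

section DistributionFunctions

variable {X Y : Type*} [MetricSpace X] [MetricSpace Y]

-- `lowerDist` and `upperDist` are, by definition, the `liminf` and `limsup` of this sequence.
noncomputable def closeFreq (f : X → X) (x y : X) (δ : ℝ) (m : ℕ) : ℝ :=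
  (((Finset.range (m + 1)).filter (fun k => dist (f^[k] x) (f^[k] y) < δ)).card : ℝ) / m

lemma closeFreq_nonneg (f : X → X) (x y : X) (δ : ℝ) (m : ℕ) : 0 ≤ closeFreq f x y δ m := by
  unfold closeFreq
  positivity

lemma closeFreq_le_two (f : X → X) (x y : X) (δ : ℝ) (m : ℕ) : closeFreq f x y δ m ≤ 2 := by
  rcases Nat.eq_zero_or_pos m with rfl | hm
  · simp [closeFreq]
  have hcard : ((Finset.range (m + 1)).filter (fun k => dist (f^[k] x) (f^[k] y) < δ)).card
      ≤ 2 * m :=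
    (Finset.card_filter_le _ _).trans (by simp only [Finset.card_range]; omega)
  rw [closeFreq, div_le_iff₀ (by exact_mod_cast hm)]
  exact_mod_cast hcard

lemma closeFreq_mono {f : X → X} {g : Y → Y} {x y : X} {x' y' : Y} {δ δ' : ℝ}
    (H : ∀ k, dist (f^[k] x) (f^[k] y) < δ → dist (g^[k] x') (g^[k] y') < δ') (m : ℕ) :
    closeFreq f x y δ m ≤ closeFreq g x' y' δ' m := by
  unfold closeFreq
  gcongr ?_ / _
  exact_mod_cast Finset.card_le_card (Finset.monotone_filter_right _ fun k _ hk => H k hk)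

lemma closeFreq_isBoundedUnder_le (f : X → X) (x y : X) (δ : ℝ) :
    IsBoundedUnder (· ≤ ·) atTop (closeFreq f x y δ) :=
  isBoundedUnder_of ⟨2, closeFreq_le_two f x y δ⟩

lemma closeFreq_isBoundedUnder_ge (f : X → X) (x y : X) (δ : ℝ) :
    IsBoundedUnder (· ≥ ·) atTop (closeFreq f x y δ) :=
  isBoundedUnder_of ⟨0, closeFreq_nonneg f x y δ⟩

lemma lowerDist_mono {f : X → X} {g : Y → Y} {x y : X} {x' y' : Y} {δ δ' : ℝ}
    (H : ∀ k, dist (f^[k] x) (f^[k] y) < δ → dist (g^[k] x') (g^[k] y') < δ') :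
    lowerDist f x y δ ≤ lowerDist g x' y' δ' :=
  liminf_le_liminf (.of_forall (closeFreq_mono H)) (closeFreq_isBoundedUnder_ge f x y δ)
    (closeFreq_isBoundedUnder_le g x' y' δ').isCoboundedUnder_ge

lemma upperDist_mono {f : X → X} {g : Y → Y} {x y : X} {x' y' : Y} {δ δ' : ℝ}
    (H : ∀ k, dist (f^[k] x) (f^[k] y) < δ → dist (g^[k] x') (g^[k] y') < δ') :
    upperDist f x y δ ≤ upperDist g x' y' δ' :=
  limsup_le_limsup (.of_forall (closeFreq_mono H))
    (closeFreq_isBoundedUnder_ge f x y δ).isCoboundedUnder_le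
    (closeFreq_isBoundedUnder_le g x' y' δ')

end DistributionFunctions

section Conjugacy

variable {X Y : Type*} [MetricSpace X] [MetricSpace Y] {f : Y → Y} {g : X → X}

theorem DC2HalfPair.of_semiconj (e : X ≃ᵤ Y) (he : Semiconj e g f) {x y : X}
    (hxy : DC2HalfPair f (e x) (e y)) : DC2HalfPair g x y := by
  obtain ⟨c, s, hc, hs, hcs⟩ := hxy
  obtain ⟨s', hs', he_close⟩ :=
    Metric.uniformContinuous_iff.1 e.uniformContinuous (s / 2) (half_pos hs)
  refine ⟨c, s', hc, hs', fun δ hδ hδs' => ⟨?_, ?_⟩⟩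
  · calc lowerDist g x y δ ≤ lowerDist f (e x) (e y) (s / 2) :=
          lowerDist_mono fun k hk => by
            rw [← he.iterate_right k x, ← he.iterate_right k y]
            exact he_close (hk.trans hδs')
      _ < c := (hcs _ (half_pos hs) (half_lt_self hs)).1
  · obtain ⟨ε, hε, he_symm_close⟩ :=
      Metric.uniformContinuous_iff.1 e.uniformContinuous_symm δ hδ
    calc c < upperDist f (e x) (e y) (min ε (s / 2)) :=
          (hcs _ (lt_min hε (half_pos hs)) ((min_le_right _ _).trans_lt (half_lt_self hs))).2
      _ ≤ upperDist g x y δ :=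
          upperDist_mono fun k hk => by
            have := he_symm_close (hk.trans_le (min_le_left _ _))
            rwa [← he.iterate_right k x, ← he.iterate_right k y,
              e.symm_apply_apply, e.symm_apply_apply] at this

theorem DC2HalfChaotic.of_semiconj (e : X ≃ᵤ Y) (he : Semiconj e g f)
    (hf : DC2HalfChaotic f) : DC2HalfChaotic g := by
  obtain ⟨S, hS, hpairs⟩ := hf
  refine ⟨e ⁻¹' S, fun hcount => hS ?_, fun x hx y hy hxy => ?_⟩
  · simpa only [e.image_preimage] using hcount.image e
  · exact .of_semiconj e he (hpairs _ hx _ hy (e.injective.ne hxy))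

end Conjugacy

def Homeomorph.toUniformEquivOfCompactSpace {X Y : Type*} [UniformSpace X] [UniformSpace Y]
    [CompactSpace X] [CompactSpace Y] (h : X ≃ₜ Y) : X ≃ᵤ Y where
  toEquiv := h.toEquiv
  uniformContinuous_toFun := CompactSpace.uniformContinuous_of_continuous h.continuous
  uniformContinuous_invFun := CompactSpace.uniformContinuous_of_continuous h.symm.continuous

@[simp]
lemma Homeomorph.coe_toUniformEquivOfCompactSpace {X Y : Type*} [UniformSpace X]
    [UniformSpace Y] [CompactSpace X] [CompactSpace Y] (h : X ≃ₜ Y) :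
    ⇑h.toUniformEquivOfCompactSpace = h :=
  rfl

@[simp]
lemma Homeomorph.coe_toUniformEquivOfCompactSpace_symm {X Y : Type*} [UniformSpace X]
    [UniformSpace Y] [CompactSpace X] [CompactSpace Y] (h : X ≃ₜ Y) :
    ⇑h.toUniformEquivOfCompactSpace.symm = h.symm :=
  rfl

theorem stmt_5_general {X : Type*} [MetricSpace X] [CompactSpace X] (f g : X → X)
    (h : X ≃ₜ X)
    (hconj : ∀ x : X, f x = h (g (h.symm x))) :
    (∀ u v : X, DC2HalfPair f u v → DC2HalfPair g (h.symm u) (h.symm v)) ∧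
    (DC2HalfChaotic f ↔ DC2HalfChaotic g) := by
  set e := h.toUniformEquivOfCompactSpace
  have he : Semiconj e g f := fun x => by simp [e, hconj]
  have he_symm : Semiconj e.symm f g := fun x => by simp [e, hconj]
  refine ⟨fun u v huv => .of_semiconj e he ?_, .of_semiconj e he, .of_semiconj e.symm he_symm⟩
  simpa [e] using huv

/-- DC2½ is preserved by topological conjugacy: if `f = h ∘ g ∘ h⁻¹` and `(u,v)` is
distributionally scrambled of type 2½ for `f`, then `(h⁻¹ u, h⁻¹ v)` is distributionally
scrambled of type 2½ for `g`; in particular `f` is DC2½ chaotic iff `g` is. -/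
theorem stmt_5 {X : Type*} [MetricSpace X] [CompactSpace X] (f g : X → X)
    (hf : Continuous f) (hg : Continuous g) (h : X ≃ₜ X)
    (hconj : ∀ x : X, f x = h (g (h.symm x))) :
    (∀ u v : X, DC2HalfPair f u v → DC2HalfPair g (h.symm u) (h.symm v)) ∧
    (DC2HalfChaotic f ↔ DC2HalfChaotic g) :=
  stmt_5_general f g h hconj
end

section
/- With p as above, define η^i = ∑_{j=1}^{i} p(j) mod 1. Suppose the sequence (n_m) satisfies lim_{m→∞} s_m/n_m = 0 and lim_{m→∞} 2^m/n_m = 0, where s_m = ∑_{i=0}^{m-1} n_i. Then letting U_k = #{0 ≤ i ≤ s_k + n_k : η^i = 0} and L_k = #{0 ≤ i ≤ s_k + n_k : η^i = 1/2}, one has L_{2k} ≥ n_{2k} − 2^{2k} and U_{2k+1} ≥ n_{2k+1} − 2^{2k+1} for all k ≥ 0, and consequently limsup_k U_{2k+1}/(s_{2k+1}+n_{2k+1}) = 1 and liminf over even indices of L-complement density: lim_k (n_{2k} − 2^{2k})/(s_{2k}+n_{2k}) = 1. -/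
/-!
Over the ramp `s_m < k ≤ s_m + 2^m` of block `m` (with `s_m = blockStart n m`) the increments
`1/2^(m+1)` add up to exactly `1/2`, and they vanish on the rest of the block. So on the flat
part of block `m` the partial sum is `(m+1)/2`, whose fractional part is `1/2` for even `m` and
`0` for odd `m`; the flat part has `n_m - 2^m + 1` points, which is almost all of
`[0, s_m + n_m]` since `s_m/n_m → 0` and `2^m/n_m → 0`.
-/

open Finset Filter Topology

def blockStart (n : ℕ → ℕ) (m : ℕ) : ℕ := ∑ i ∈ range m, n i

lemma blockStart_succ (n : ℕ → ℕ) (m : ℕ) : blockStart n (m + 1) = blockStart n m + n m :=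
  sum_range_succ n m

section Blocks

variable {n : ℕ → ℕ} {p : ℕ → ℝ}

/-- Blocks must be at least as long as their ramps: otherwise the index `s_{m+1} + 1` would lie
on the ramps of both blocks `m` and `m + 1`, where `p` takes the distinct values `1/2^(m+1)` and
`1/2^(m+2)`. -/
lemma two_pow_le_of_ramp
    (hp : ∀ m k, blockStart n m < k → k ≤ blockStart n m + 2 ^ m → p k = 1 / 2 ^ (m + 1))
    (m : ℕ) : 2 ^ m ≤ n m := by
  by_contra! hlt
  have h₁ := hp m (blockStart n (m + 1) + 1) (by rw [blockStart_succ]; omega)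
    (by rw [blockStart_succ]; omega)
  have h₂ := hp (m + 1) (blockStart n (m + 1) + 1) (by omega) (by omega)
  rw [h₁, pow_succ _ (m + 1)] at h₂
  have : (0 : ℝ) < 2 ^ (m + 1) := by positivity
  field_simp at h₂
  norm_num at h₂

lemma sum_Ioc_ramp
    (hp : ∀ m k, blockStart n m < k → k ≤ blockStart n m + 2 ^ m → p k = 1 / 2 ^ (m + 1))
    (m : ℕ) : ∑ j ∈ Ioc (blockStart n m) (blockStart n m + 2 ^ m), p j = 1 / 2 := by
  rw [sum_congr rfl fun j hj => hp m j (mem_Ioc.1 hj).1 (mem_Ioc.1 hj).2, sum_const,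
    Nat.card_Ioc, Nat.add_sub_cancel_left, nsmul_eq_mul, pow_succ]
  push_cast
  field_simp

lemma sum_Ioc_zero_of_flat
    (hp₁ : ∀ m k, blockStart n m < k → k ≤ blockStart n m + 2 ^ m → p k = 1 / 2 ^ (m + 1))
    (hp₂ : ∀ m k, blockStart n m + 2 ^ m < k → k ≤ blockStart n m + n m → p k = 0)
    {m i : ℕ} (hstart : ∑ j ∈ Ioc 0 (blockStart n m), p j = m / 2)
    (hi₁ : blockStart n m + 2 ^ m ≤ i) (hi₂ : i ≤ blockStart n m + n m) :
    ∑ j ∈ Ioc 0 i, p j = (m + 1) / 2 := by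
  have hflat : ∑ j ∈ Ioc (blockStart n m + 2 ^ m) i, p j = 0 :=
    sum_eq_zero fun j hj => hp₂ m j (mem_Ioc.1 hj).1 ((mem_Ioc.1 hj).2.trans hi₂)
  rw [← sum_Ioc_consecutive p (Nat.zero_le _) hi₁,
    ← sum_Ioc_consecutive p (Nat.zero_le _) (Nat.le_add_right _ (2 ^ m)), hstart,
    sum_Ioc_ramp hp₁, hflat]
  ring

lemma sum_Ioc_zero_blockStart
    (hp₁ : ∀ m k, blockStart n m < k → k ≤ blockStart n m + 2 ^ m → p k = 1 / 2 ^ (m + 1))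
    (hp₂ : ∀ m k, blockStart n m + 2 ^ m < k → k ≤ blockStart n m + n m → p k = 0)
    (m : ℕ) : ∑ j ∈ Ioc 0 (blockStart n m), p j = m / 2 := by
  induction m with
  | zero => simp [blockStart]
  | succ m ih =>
    push_cast
    rw [blockStart_succ]
    exact sum_Ioc_zero_of_flat hp₁ hp₂ ih (by have := two_pow_le_of_ramp hp₁ m; omega) le_rfl

lemma sum_Icc_one_of_flat
    (hp₁ : ∀ m k, blockStart n m < k → k ≤ blockStart n m + 2 ^ m → p k = 1 / 2 ^ (m + 1))
    (hp₂ : ∀ m k, blockStart n m + 2 ^ m < k → k ≤ blockStart n m + n m → p k = 0)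
    {m i : ℕ} (hi₁ : blockStart n m + 2 ^ m ≤ i) (hi₂ : i ≤ blockStart n m + n m) :
    ∑ j ∈ Icc 1 i, p j = (m + 1) / 2 :=
  sum_Ioc_zero_of_flat hp₁ hp₂ (sum_Ioc_zero_blockStart hp₁ hp₂ m) hi₁ hi₂

lemma natCast_sub_two_pow_le_card_filter {P : ℕ → Prop} [DecidablePred P] (m : ℕ)
    (hP : ∀ i, blockStart n m + 2 ^ m ≤ i → i ≤ blockStart n m + n m → P i) :
    (n m : ℝ) - 2 ^ m ≤ #((range (blockStart n m + n m + 1)).filter P) := by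
  have hsub : Icc (blockStart n m + 2 ^ m) (blockStart n m + n m) ⊆
      (range (blockStart n m + n m + 1)).filter P := fun i hi => by
    rw [mem_Icc] at hi
    exact mem_filter.2 ⟨mem_range.2 (by omega), hP i hi.1 hi.2⟩
  have hcard := card_le_card hsub
  rw [Nat.card_Icc] at hcard
  have : n m + 1 ≤ #((range (blockStart n m + n m + 1)).filter P) + 2 ^ m := by omega
  have : (n m : ℝ) + 1 ≤ #((range (blockStart n m + n m + 1)).filter P) + 2 ^ m := by
    exact_mod_cast this
  linarith

lemma tendsto_blockStart_add_atTop
    (hp : ∀ m k, blockStart n m < k → k ≤ blockStart n m + 2 ^ m → p k = 1 / 2 ^ (m + 1)) :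
    Tendsto (fun m => (blockStart n m : ℝ) + n m) atTop atTop := by
  refine tendsto_atTop_mono (fun m => ?_) (tendsto_pow_atTop_atTop_of_one_lt one_lt_two)
  have : (2 : ℝ) ^ m ≤ n m := by exact_mod_cast two_pow_le_of_ramp hp m
  have : (0 : ℝ) ≤ blockStart n m := Nat.cast_nonneg _
  linarith

end Blocks

lemma Int.fract_natCast_two_mul_add_one_div_two (k : ℕ) :
    Int.fract ((((2 * k : ℕ) : ℝ) + 1) / 2) = 1 / 2 := by
  rw [show (((2 * k : ℕ) : ℝ) + 1) / 2 = (k : ℤ) + 1 / 2 by push_cast; ring,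
    Int.fract_intCast_add, Int.fract_eq_self.2 (by norm_num)]

lemma Int.fract_natCast_two_mul_add_two_div_two (k : ℕ) :
    Int.fract ((((2 * k + 1 : ℕ) : ℝ) + 1) / 2) = 0 := by
  rw [show (((2 * k + 1 : ℕ) : ℝ) + 1) / 2 = ((k + 1 : ℤ) : ℝ) by push_cast; ring,
    Int.fract_intCast]

section Limits

variable {α : Type*} {l : Filter α}

lemma tendsto_sub_div_add_of_div_tendsto_zero {x y z : α → ℝ} (hx : ∀ᶠ a in l, x a ≠ 0)
    (hy : Tendsto (fun a => y a / x a) l (𝓝 0)) (hz : Tendsto (fun a => z a / x a) l (𝓝 0)) :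
    Tendsto (fun a => (x a - y a) / (z a + x a)) l (𝓝 1) := by
  have h : Tendsto (fun a => (1 - y a / x a) / (z a / x a + 1)) l (𝓝 ((1 - 0) / (0 + 1))) :=
    (tendsto_const_nhds.sub hy).div (hz.add tendsto_const_nhds) (by norm_num)
  rw [sub_zero, zero_add, div_one] at h
  refine h.congr' (hx.mono fun a ha => ?_)
  rw [one_sub_div ha, div_add_one ha, div_div_div_cancel_right₀ ha]

lemma tendsto_div_of_le_of_le_add_one {c d e : α → ℝ} (hd : Tendsto d l atTop)
    (he : Tendsto (fun a => e a / d a) l (𝓝 1)) (hlow : ∀ a, e a ≤ c a)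
    (hup : ∀ a, c a ≤ d a + 1) : Tendsto (fun a => c a / d a) l (𝓝 1) := by
  have hupper : Tendsto (fun a => 1 + (d a)⁻¹) l (𝓝 1) := by
    simpa using (tendsto_const_nhds (x := (1 : ℝ))).add hd.inv_tendsto_atTop
  refine tendsto_of_tendsto_of_tendsto_of_le_of_le' he hupper ?_ ?_
  · filter_upwards [hd.eventually_gt_atTop 0] with a ha
    exact div_le_div_of_nonneg_right (hlow a) ha.le
  · filter_upwards [hd.eventually_gt_atTop 0] with a ha
    rw [div_le_iff₀ ha, add_mul, one_mul, inv_mul_cancel₀ ha.ne']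
    linarith [hup a]

end Limits

theorem stmt_15_general (n : ℕ → ℕ) (p : ℕ → ℝ)
    (hp1 : ∀ m k : ℕ, (∑ i ∈ Finset.range m, n i) < k → k ≤ (∑ i ∈ Finset.range m, n i) + 2 ^ m →
      p k = 1 / 2 ^ (m + 1))
    (hp2 : ∀ m k : ℕ, (∑ i ∈ Finset.range m, n i) + 2 ^ m < k →
      k ≤ (∑ i ∈ Finset.range m, n i) + n m → p k = 0)
    (hs : Filter.Tendsto (fun m : ℕ => ((∑ i ∈ Finset.range m, n i : ℕ) : ℝ) / n m)
      Filter.atTop (nhds 0))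
    (h2 : Filter.Tendsto (fun m : ℕ => ((2 : ℝ) ^ m) / n m) Filter.atTop (nhds 0))
    (η : ℕ → ℝ) (hη : ∀ i : ℕ, η i = Int.fract (∑ j ∈ Finset.Icc 1 i, p j))
    (U L : ℕ → ℕ)
    (hU : ∀ k : ℕ, U k =
      ((Finset.range ((∑ i ∈ Finset.range k, n i) + n k + 1)).filter (fun i => η i = 0)).card)
    (hL : ∀ k : ℕ, L k =
      ((Finset.range ((∑ i ∈ Finset.range k, n i) + n k + 1)).filter
        (fun i => η i = 1 / 2)).card) :
    (∀ k : ℕ, (n (2 * k) : ℝ) - 2 ^ (2 * k) ≤ L (2 * k)) ∧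
    (∀ k : ℕ, (n (2 * k + 1) : ℝ) - 2 ^ (2 * k + 1) ≤ U (2 * k + 1)) ∧
    Filter.limsup
      (fun k : ℕ => (U (2 * k + 1) : ℝ) /
        ((∑ i ∈ Finset.range (2 * k + 1), n i : ℕ) + n (2 * k + 1)))
      Filter.atTop = 1 ∧
    Filter.Tendsto
      (fun k : ℕ => ((n (2 * k) : ℝ) - 2 ^ (2 * k)) /
        ((∑ i ∈ Finset.range (2 * k), n i : ℕ) + n (2 * k)))
      Filter.atTop (nhds 1) := by
  have hL_even : ∀ k : ℕ, (n (2 * k) : ℝ) - 2 ^ (2 * k) ≤ L (2 * k) := fun k => by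
    rw [hL]
    refine natCast_sub_two_pow_le_card_filter _ fun i hi₁ hi₂ => ?_
    rw [hη, sum_Icc_one_of_flat hp1 hp2 hi₁ hi₂]
    exact Int.fract_natCast_two_mul_add_one_div_two k
  have hU_odd : ∀ k : ℕ, (n (2 * k + 1) : ℝ) - 2 ^ (2 * k + 1) ≤ U (2 * k + 1) := fun k => by
    rw [hU]
    refine natCast_sub_two_pow_le_card_filter _ fun i hi₁ hi₂ => ?_
    rw [hη, sum_Icc_one_of_flat hp1 hp2 hi₁ hi₂]
    exact Int.fract_natCast_two_mul_add_two_div_two k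
  have hU_le : ∀ k, (U k : ℝ) ≤ (blockStart n k + n k : ℝ) + 1 := fun k => by
    rw [hU]
    exact_mod_cast (card_filter_le _ _).trans (card_range _).le
  have hratio : Tendsto (fun m => ((n m : ℝ) - 2 ^ m) / (blockStart n m + n m)) atTop (𝓝 1) :=
    tendsto_sub_div_add_of_div_tendsto_zero (.of_forall fun m => by
      have := (Nat.one_le_two_pow (n := m)).trans (two_pow_le_of_ramp hp1 m)
      exact Nat.cast_ne_zero.2 (by omega)) h2 hs
  have hodd : Tendsto (fun k : ℕ => 2 * k + 1) atTop atTop :=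
    StrictMono.tendsto_atTop fun _ _ h => by omega
  refine ⟨hL_even, hU_odd, ?_, hratio.comp (StrictMono.tendsto_atTop fun _ _ h => by omega)⟩
  exact (tendsto_div_of_le_of_le_add_one ((tendsto_blockStart_add_atTop hp1).comp hodd)
    (hratio.comp hodd) hU_odd fun _ => hU_le _).limsup_eq

/-- With `p` the blockwise rotation-angle function and `η^i = ∑_{j=1}^i p(j) mod 1`,
assuming `s_m/n_m → 0` and `2^m/n_m → 0`:
`L_{2k} ≥ n_{2k} − 2^{2k}`, `U_{2k+1} ≥ n_{2k+1} − 2^{2k+1}`, and consequently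
`limsup_k U_{2k+1}/(s_{2k+1}+n_{2k+1}) = 1` and `(n_{2k} − 2^{2k})/(s_{2k}+n_{2k}) → 1`,
where `U_k` (resp. `L_k`) counts `0 ≤ i ≤ s_k + n_k` with `η^i = 0` (resp. `η^i = 1/2`). -/
theorem stmt_15 (n : ℕ → ℕ) (hn : StrictMono n) (h0 : 0 < n 0) (p : ℕ → ℝ)
    (hp1 : ∀ m k : ℕ, (∑ i ∈ Finset.range m, n i) < k → k ≤ (∑ i ∈ Finset.range m, n i) + 2 ^ m →
      p k = 1 / 2 ^ (m + 1))
    (hp2 : ∀ m k : ℕ, (∑ i ∈ Finset.range m, n i) + 2 ^ m < k →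
      k ≤ (∑ i ∈ Finset.range m, n i) + n m → p k = 0)
    (hs : Filter.Tendsto (fun m : ℕ => ((∑ i ∈ Finset.range m, n i : ℕ) : ℝ) / n m)
      Filter.atTop (nhds 0))
    (h2 : Filter.Tendsto (fun m : ℕ => ((2 : ℝ) ^ m) / n m) Filter.atTop (nhds 0))
    (η : ℕ → ℝ) (hη : ∀ i : ℕ, η i = Int.fract (∑ j ∈ Finset.Icc 1 i, p j))
    (U L : ℕ → ℕ)
    (hU : ∀ k : ℕ, U k =
      ((Finset.range ((∑ i ∈ Finset.range k, n i) + n k + 1)).filter (fun i => η i = 0)).card)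
    (hL : ∀ k : ℕ, L k =
      ((Finset.range ((∑ i ∈ Finset.range k, n i) + n k + 1)).filter
        (fun i => η i = 1 / 2)).card) :
    (∀ k : ℕ, (n (2 * k) : ℝ) - 2 ^ (2 * k) ≤ L (2 * k)) ∧
    (∀ k : ℕ, (n (2 * k + 1) : ℝ) - 2 ^ (2 * k + 1) ≤ U (2 * k + 1)) ∧
    Filter.limsup
      (fun k : ℕ => (U (2 * k + 1) : ℝ) /
        ((∑ i ∈ Finset.range (2 * k + 1), n i : ℕ) + n (2 * k + 1)))
      Filter.atTop = 1 ∧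
    Filter.Tendsto
      (fun k : ℕ => ((n (2 * k) : ℝ) - 2 ^ (2 * k)) /
        ((∑ i ∈ Finset.range (2 * k), n i : ℕ) + n (2 * k)))
      Filter.atTop (nhds 1) :=
  stmt_15_general n p hp1 hp2 hs h2 η hη U L hU hL
end

section
/- Consider the real sequence a_n with blocks indexed by k: for n with l_{k−1} < n ≤ l_k where l_k = ∑_{i=1}^k i^i, set a_n to be an angle advanced by step 1/k within the block, starting from 0 at n = l_{k−1} (so the k-th block repeats the cycle 0, 1/k, 2/k, …, (k−1)/k exactly k^{k−1} times). Fix δ ∈ (0, 1/2) and a target angle φ on the circle. Then the asymptotic density of {n : ρ(a_n, φ) < δ} exists and equals 2δ, where ρ is the circle metric. -/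
/-!
In the `k`-th block the sequence runs `k ^ (k - 1)` times through the cycle `r / k`, `r < k`.
The residues `r < k` with `ρ(r / k, φ) < δ` correspond bijectively to the integers in the open
interval `(k (φ - δ), k (φ + δ))`, whose length `2δk` is at most `k`; so each cycle hits the
target arc `2δk ± 1` times. A full block thus contributes `2δ k ^ k` hits up to an error
`k ^ (k - 1)`, and an initial segment of length `m` of a block up to `m / k + k`. For
`l_B < N ≤ l_{B+1}` the accumulated error is `O(B ^ (B - 1) + N / B + B) = O(N / B)`, because
`N > l_B ≥ B ^ B`, and `B → ∞` with `N`.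
-/

/-- The circle metric on `ℝ/ℤ` (for representatives in `[0,1)`). -/
noncomputable def circleDist (a b : ℝ) : ℝ := min |a - b| (1 - |a - b|)

/-- Partial sums `l_k = ∑_{i=1}^k i^i` marking the block boundaries. -/
def blockEnd (k : ℕ) : ℕ := ∑ i ∈ Finset.Icc 1 k, i ^ i

open Finset Function

lemma Nat.count_congr {p q : ℕ → Prop} [DecidablePred p] [DecidablePred q] {n : ℕ}
    (h : ∀ k < n, p k ↔ q k) : Nat.count p n = Nat.count q n :=
  le_antisymm (Nat.count_mono_left fun k hk => (h k hk).1)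
    (Nat.count_mono_left fun k hk => (h k hk).2)

namespace Function.Periodic

variable {p : ℕ → Prop} [DecidablePred p] {k : ℕ}

lemma count_shift (hp : Periodic p k) (t : ℕ) :
    Nat.count (fun j => p (t + j)) k = Nat.count p k := by
  induction t with
  | zero => simp
  | succ t ih =>
    have h := Nat.count_succ' (fun j => p (t + j)) k
    simp only [Nat.count_succ, add_zero, ← add_assoc, add_right_comm t 1,
      show p (t + k) = p t from hp t] at h ⊢
    omega

lemma count_mul_add (hp : Periodic p k) (q s : ℕ) :
    Nat.count p (k * q + s) = q * Nat.count p k + Nat.count p s := by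
  have hshift (t j : ℕ) : p (k * t + j) = p j := by
    rw [add_comm, mul_comm]
    exact hp.nat_mul t j
  have hmul (q : ℕ) : Nat.count p (k * q) = q * Nat.count p k := by
    induction q with
    | zero => simp
    | succ q ih => simp only [mul_add_one, Nat.count_add, ih, hshift, add_one_mul]
  simp only [Nat.count_add, hmul, hshift]

lemma abs_count_sub_le (hp : Periodic p k) {α : ℝ} (hα0 : 0 ≤ α) (hα1 : α ≤ 1)
    (hc : |(Nat.count p k : ℝ) - α * k| ≤ 1) (m : ℕ) :
    |(Nat.count p m : ℝ) - α * m| ≤ (m / k : ℕ) + (m % k : ℕ) := by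
  have hcount := hp.count_mul_add (m / k) (m % k)
  rw [Nat.div_add_mod] at hcount
  have hm : (m : ℝ) = k * (m / k : ℕ) + (m % k : ℕ) := by
    exact_mod_cast (Nat.div_add_mod m k).symm
  have hrest : |(Nat.count p (m % k) : ℝ) - α * (m % k : ℕ)| ≤ (m % k : ℕ) := by
    have hs : (Nat.count p (m % k) : ℝ) ≤ (m % k : ℕ) := by exact_mod_cast Nat.count_le p
    have : α * (m % k : ℕ) ≤ (m % k : ℕ) := mul_le_of_le_one_left (Nat.cast_nonneg _) hα1
    rw [abs_le]
    constructor <;> nlinarith [Nat.cast_nonneg (α := ℝ) (Nat.count p (m % k)),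
      Nat.cast_nonneg (α := ℝ) (m % k)]
  rw [hcount, hm]
  push_cast
  calc _ = |(m / k : ℕ) * ((Nat.count p k : ℝ) - α * k) +
          ((Nat.count p (m % k) : ℝ) - α * (m % k : ℕ))| := by ring_nf
    _ ≤ (m / k : ℕ) * 1 + (m % k : ℕ) := by
        refine (abs_add_le _ _).trans (add_le_add ?_ hrest)
        rw [abs_mul, Nat.abs_cast]
        exact mul_le_mul_of_nonneg_left hc (Nat.cast_nonneg _)
    _ = (m / k : ℕ) + (m % k : ℕ) := by ring

end Function.Periodic

lemma circleDist_lt_iff_exists_int {x φ δ : ℝ} (hxφ : |x - φ| ≤ 1) :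
    circleDist x φ < δ ↔ ∃ m : ℤ, |x - φ - m| < δ := by
  rw [circleDist, min_lt_iff]
  constructor
  · rintro (h | h)
    · exact ⟨0, by simpa using h⟩
    · rcases le_or_gt 0 (x - φ) with hd | hd
      · refine ⟨1, ?_⟩
        rw [abs_of_nonneg hd] at h
        rw [Int.cast_one, abs_lt]
        constructor <;> linarith [(abs_le.1 hxφ).2]
      · refine ⟨-1, ?_⟩
        rw [abs_of_neg hd] at h
        rw [Int.cast_neg, Int.cast_one, abs_lt]
        constructor <;> linarith [(abs_le.1 hxφ).1]
  · rintro ⟨m, hm⟩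
    rcases eq_or_ne m 0 with rfl | hm0
    · left
      simpa using hm
    · right
      have h1 : (1 : ℝ) ≤ |(m : ℝ)| := by exact_mod_cast Int.one_le_abs hm0
      have h2 : |(m : ℝ)| ≤ |x - φ| + |x - φ - m| := by
        simpa using abs_sub (x - φ) (x - φ - m)
      linarith

lemma abs_card_Ioo_floor_ceil_sub_le {x y : ℝ} (hxy : x < y) :
    |(#(Ioo ⌊x⌋ ⌈y⌉) : ℝ) - (y - x)| ≤ 1 := by
  have hlt : ⌊x⌋ < ⌈y⌉ :=
    Int.cast_lt.1 ((Int.floor_le x).trans_lt (hxy.trans_le (Int.le_ceil y)))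
  have hcard : (#(Ioo ⌊x⌋ ⌈y⌉) : ℝ) = ⌈y⌉ - ⌊x⌋ - 1 := by
    rw [Int.card_Ioo, ← Int.cast_natCast, Int.toNat_of_nonneg (by omega)]
    push_cast
    ring
  rw [hcard, abs_le]
  constructor <;>
    linarith [Int.floor_le x, Int.lt_floor_add_one x, Int.le_ceil y, Int.ceil_lt_add_one y]

open scoped Classical in
lemma count_exists_add_mul_mem_Ioo_eq_card {k : ℕ} (hk : 0 < k) {x y : ℝ}
    (hxy : y - x ≤ k) :
    Nat.count (fun r : ℕ => ∃ m : ℤ,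
        x < ((r + k * m : ℤ) : ℝ) ∧ ((r + k * m : ℤ) : ℝ) < y) k =
      #(Ioo ⌊x⌋ ⌈y⌉) := by
  have hk' : (0 : ℤ) < k := by exact_mod_cast hk
  have hinj : Set.InjOn (fun j : ℤ => (j % k).toNat) (Ioo ⌊x⌋ ⌈y⌉) := by
    intro i hi j hj hij
    simp only [coe_Ioo, Set.mem_Ioo, Int.floor_lt, Int.lt_ceil] at hi hj hij
    have hmod : i % k = j % k := by
      have := Int.emod_nonneg i hk'.ne'
      have := Int.emod_nonneg j hk'.ne'
      omega
    have hlt : |j - i| < k := by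
      have : |(j : ℝ) - i| < k := abs_sub_lt_iff.2 ⟨by linarith, by linarith⟩
      exact_mod_cast this
    have := Int.eq_zero_of_abs_lt_dvd (Int.ModEq.dvd hmod) hlt
    omega
  rw [Nat.count_eq_card_filter_range, ← card_image_of_injOn hinj]
  congr 1
  ext r
  simp only [mem_filter, mem_range, mem_image, mem_Ioo, Int.floor_lt, Int.lt_ceil]
  constructor
  · rintro ⟨hr, m, hx, hy⟩
    refine ⟨r + k * m, ⟨hx, hy⟩, ?_⟩
    rw [Int.add_mul_emod_self_left, Int.emod_eq_of_lt (by omega) (by omega)]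
    rfl
  · rintro ⟨j, ⟨hx, hy⟩, rfl⟩
    have h0 := Int.emod_nonneg j hk'.ne'
    refine ⟨by have := Int.emod_lt_of_pos j hk'; omega, j / k, ?_⟩
    rw [Int.toNat_of_nonneg h0, Int.emod_add_mul_ediv]
    exact ⟨hx, hy⟩

lemma count_circleDist_lt_eq_card_Ioo {k : ℕ} (hk : 0 < k) {δ φ : ℝ} (hδ : δ ≤ 1 / 2)
    (hφ0 : 0 ≤ φ) (hφ1 : φ < 1) :
    Nat.count (fun r : ℕ => circleDist (r / k) φ < δ) k =
      #(Ioo ⌊k * (φ - δ)⌋ ⌈k * (φ + δ)⌉) := by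
  classical
  have hk' : (0 : ℝ) < k := by exact_mod_cast hk
  rw [← count_exists_add_mul_mem_Ioo_eq_card hk (by nlinarith)]
  refine Nat.count_congr fun r hr => ?_
  have hr1 : (r : ℝ) / k < 1 := (div_lt_one hk').2 (by exact_mod_cast hr)
  have hr0 : 0 ≤ (r : ℝ) / k := by positivity
  rw [circleDist_lt_iff_exists_int (abs_le.2 ⟨by linarith, by linarith⟩),
    ← (Equiv.neg ℤ).exists_congr_right]
  refine exists_congr fun m => ?_
  have key :
      (r : ℝ) / k - φ - (Equiv.neg ℤ m : ℤ) = (((r + k * m : ℤ) : ℝ) - k * φ) / k := by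
    simp only [Equiv.neg_apply, Int.cast_neg, Int.cast_add, Int.cast_mul, Int.cast_natCast]
    field_simp
    ring
  rw [key, abs_div, abs_of_pos hk', div_lt_iff₀ hk', abs_lt]
  constructor <;> rintro ⟨h1, h2⟩ <;> constructor <;> linarith

lemma abs_count_circleDist_lt_sub_le {k : ℕ} (hk : 0 < k) {δ φ : ℝ} (hδ0 : 0 < δ)
    (hδ : δ ≤ 1 / 2) (hφ0 : 0 ≤ φ) (hφ1 : φ < 1) :
    |(Nat.count (fun r : ℕ => circleDist (r / k) φ < δ) k : ℝ) - 2 * δ * k| ≤ 1 := by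
  have hk' : (0 : ℝ) < k := by exact_mod_cast hk
  rw [count_circleDist_lt_eq_card_Ioo hk hδ hφ0 hφ1]
  convert abs_card_Ioo_floor_ceil_sub_le (x := k * (φ - δ)) (y := k * (φ + δ)) (by nlinarith)
    using 3
  ring

lemma abs_count_cycle_sub_le {k : ℕ} (hk : 0 < k) {δ φ : ℝ} (hδ0 : 0 < δ)
    (hδ : δ ≤ 1 / 2) (hφ0 : 0 ≤ φ) (hφ1 : φ < 1) (m : ℕ) :
    |(Nat.count (fun j => circleDist (((1 + j) % k : ℕ) / k) φ < δ) m : ℝ) - 2 * δ * m| ≤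
      (m / k : ℕ) + (m % k : ℕ) := by
  have hperiodic : Periodic (fun j => circleDist ((j % k : ℕ) / k) φ < δ) k := fun j => by
    simp only [Nat.add_mod_right]
  refine (hperiodic.const_add 1).abs_count_sub_le (by linarith) (by linarith) ?_ m
  rw [hperiodic.count_shift 1,
    Nat.count_congr fun r hr => by rw [Nat.mod_eq_of_lt hr]]
  exact abs_count_circleDist_lt_sub_le hk hδ0 hδ hφ0 hφ1

lemma blockEnd_succ (k : ℕ) : blockEnd (k + 1) = blockEnd k + (k + 1) ^ (k + 1) :=
  sum_Icc_succ_top (by omega) _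

lemma blockEnd_strictMono : StrictMono blockEnd :=
  strictMono_nat_of_lt_succ fun k => by
    rw [blockEnd_succ]
    exact Nat.lt_add_of_pos_right (by positivity)

lemma self_pow_self_le_blockEnd {k : ℕ} (hk : 1 ≤ k) : k ^ k ≤ blockEnd k :=
  single_le_sum (f := fun i => i ^ i) (fun _ _ => Nat.zero_le _) (mem_Icc.2 ⟨hk, le_rfl⟩)

lemma exists_blockEnd_lt_le {N : ℕ} (hN : 0 < N) :
    ∃ B, blockEnd B < N ∧ N ≤ blockEnd (B + 1) := by
  have h : ∃ B, N ≤ blockEnd (B + 1) :=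
    ⟨N, (Nat.le_succ N).trans <|
      (Nat.le_self_pow N.succ_ne_zero _).trans (self_pow_self_le_blockEnd N.succ_pos)⟩
  refine ⟨Nat.find h, ?_, Nat.find_spec h⟩
  rcases hB : Nat.find h with _ | B
  · simpa [blockEnd] using hN
  · exact not_le.1 (Nat.find_min h (by omega : B < Nat.find h))

lemma sum_range_succ_pow_le (B : ℕ) :
    ∑ i ∈ range (B + 1), (i + 1) ^ i ≤ 2 * (B + 1) ^ B := by
  induction B with
  | zero => simp
  | succ B ih =>
    have : 2 * (B + 1) ^ B ≤ (B + 1 + 1) ^ (B + 1) :=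
      calc 2 * (B + 1) ^ B ≤ (B + 2) * (B + 2) ^ B := by gcongr <;> omega
        _ = (B + 1 + 1) ^ (B + 1) := by ring
    rw [sum_range_succ]
    omega

lemma sum_range_succ_pow_mul_le (B : ℕ) : (∑ i ∈ range B, (i + 1) ^ i) * B ≤ 2 * B ^ B := by
  rcases B with _ | B
  · simp
  · calc (∑ i ∈ range (B + 1), (i + 1) ^ i) * (B + 1) ≤ 2 * (B + 1) ^ B * (B + 1) := by
          gcongr
          exact sum_range_succ_pow_le B
      _ = 2 * (B + 1) ^ (B + 1) := by ring

lemma one_add_sum_add_div_add_mod_mul_le {B : ℕ} (hB : 2 ≤ B) (m : ℕ) :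
    (1 + ∑ i ∈ range B, (i + 1) ^ i + m / (B + 1) + m % (B + 1)) * B ≤
      5 * (blockEnd B + m) := by
  have hS := sum_range_succ_pow_mul_le B
  have hpow := self_pow_self_le_blockEnd (k := B) (by omega)
  have hsq : B ^ 2 ≤ B ^ B := Nat.pow_le_pow_right (by omega) hB
  have hdiv : m / (B + 1) * B ≤ m :=
    (Nat.mul_le_mul_left _ (Nat.le_succ B)).trans (Nat.div_mul_le_self m (B + 1))
  have hmod : m % (B + 1) * B ≤ B * B :=
    Nat.mul_le_mul_right _ (Nat.lt_succ_iff.1 (Nat.mod_lt m B.succ_pos))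
  nlinarith [Nat.le_mul_self B]

def IsBlockCycle (a : ℕ → ℝ) : Prop :=
  ∀ k : ℕ, 1 ≤ k → ∀ n : ℕ, blockEnd (k - 1) < n → n ≤ blockEnd k →
    a n = (((n - blockEnd (k - 1)) % k : ℕ) : ℝ) / k

namespace IsBlockCycle

variable {a : ℕ → ℝ}

/-- Index `0` lies in no block; after the shift `n ↦ 1 + n` the `k`-th block occupies
`[blockEnd (k - 1), blockEnd k)`. -/
lemma count_add_block (ha : IsBlockCycle a) (P : ℝ → Prop) [DecidablePred P] {k m : ℕ}
    (hk : 1 ≤ k) (hm : m ≤ k ^ k) :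
    Nat.count (fun n => P (a (1 + n))) (blockEnd (k - 1) + m) =
      Nat.count (fun n => P (a (1 + n))) (blockEnd (k - 1)) +
        Nat.count (fun j => P (((1 + j) % k : ℕ) / k)) m := by
  have hk' : blockEnd k = blockEnd (k - 1) + k ^ k := by
    obtain ⟨k, rfl⟩ := Nat.exists_eq_add_of_le' hk
    simp [blockEnd_succ]
  rw [Nat.count_add]
  congr 1
  refine Nat.count_congr fun j hj => ?_
  rw [ha k hk _ (by omega) (by omega),
    show 1 + (blockEnd (k - 1) + j) - blockEnd (k - 1) = 1 + j by omega]

lemma abs_count_blockEnd_sub_le (ha : IsBlockCycle a) {δ φ : ℝ} (hδ0 : 0 < δ)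
    (hδ : δ ≤ 1 / 2) (hφ0 : 0 ≤ φ) (hφ1 : φ < 1) (B : ℕ) :
    |(Nat.count (fun n => circleDist (a (1 + n)) φ < δ) (blockEnd B) : ℝ) -
        2 * δ * blockEnd B| ≤ ∑ i ∈ range B, (i + 1) ^ i := by
  induction B with
  | zero => simp [blockEnd]
  | succ B ih =>
    have hblock :=
      ha.count_add_block (fun x => circleDist x φ < δ) (k := B + 1) (by omega) le_rfl
    have hcycle :=
      abs_count_cycle_sub_le (k := B + 1) (by omega) hδ0 hδ hφ0 hφ1 ((B + 1) ^ (B + 1))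
    have hdiv : (B + 1) ^ (B + 1) / (B + 1) = (B + 1) ^ B := by
      rw [pow_succ, Nat.mul_div_cancel _ (by omega)]
    have hmod : (B + 1) ^ (B + 1) % (B + 1) = 0 := by rw [pow_succ, Nat.mul_mod_left]
    rw [hdiv, hmod, Nat.cast_zero, add_zero] at hcycle
    simp only [Nat.add_sub_cancel, ← blockEnd_succ] at hblock
    rw [hblock, blockEnd_succ, sum_range_succ, Nat.cast_add (Nat.count _ _),
      Nat.cast_add (blockEnd B), Nat.cast_add (∑ i ∈ range B, _), mul_add, add_sub_add_comm]
    exact (abs_add_le _ _).trans (add_le_add ih hcycle)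

lemma abs_count_sub_mul_le (ha : IsBlockCycle a) {δ φ : ℝ} (hδ0 : 0 < δ) (hδ : δ ≤ 1 / 2)
    (hφ0 : 0 ≤ φ) (hφ1 : φ < 1) {B N : ℕ} (hB : 2 ≤ B) (h1 : blockEnd B < N)
    (h2 : N ≤ blockEnd (B + 1)) :
    |(Nat.count (fun n => circleDist (a n) φ < δ) (N + 1) : ℝ) - 2 * δ * N| * B ≤ 5 * N := by
  obtain ⟨m, rfl⟩ : ∃ m, N = blockEnd B + m := ⟨N - blockEnd B, by omega⟩
  have hm : m ≤ (B + 1) ^ (B + 1) := by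
    rw [blockEnd_succ] at h2
    omega
  set S := ∑ i ∈ range B, (i + 1) ^ i
  have hblock := ha.count_add_block (fun x => circleDist x φ < δ) (k := B + 1) (by omega) hm
  simp only [Nat.add_sub_cancel] at hblock
  set cprefix := Nat.count (fun n => circleDist (a (1 + n)) φ < δ) (blockEnd B)
  set cblock :=
    Nat.count (fun j => circleDist (((1 + j) % (B + 1) : ℕ) / ((B + 1 : ℕ) : ℝ)) φ < δ) m
  have hzero : (Nat.count (fun n => circleDist (a n) φ < δ) 1 : ℝ) ≤ 1 := by
    exact_mod_cast Nat.count_le _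
  have hprefix : |(cprefix : ℝ) - 2 * δ * blockEnd B| ≤ S :=
    ha.abs_count_blockEnd_sub_le hδ0 hδ hφ0 hφ1 B
  have hcycle : |(cblock : ℝ) - 2 * δ * m| ≤ (m / (B + 1) : ℕ) + (m % (B + 1) : ℕ) :=
    abs_count_cycle_sub_le (by omega) hδ0 hδ hφ0 hφ1 m
  have herr : |(Nat.count (fun n => circleDist (a n) φ < δ) (blockEnd B + m + 1) : ℝ) -
      2 * δ * (blockEnd B + m : ℕ)| ≤ (1 + S + m / (B + 1) + m % (B + 1) : ℕ) := by
    rw [add_comm _ 1, Nat.count_add, hblock]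
    push_cast
    calc _ = |(Nat.count (fun n => circleDist (a n) φ < δ) 1 : ℝ) +
            ((cprefix : ℝ) - 2 * δ * blockEnd B) + ((cblock : ℝ) - 2 * δ * m)| := by ring_nf
      _ ≤ |(Nat.count (fun n => circleDist (a n) φ < δ) 1 : ℝ)| +
            |(cprefix : ℝ) - 2 * δ * blockEnd B| + |(cblock : ℝ) - 2 * δ * m| :=
          abs_add_three _ _ _
      _ ≤ _ := by
          rw [Nat.abs_cast]
          linarith
  calc _ ≤ ((1 + S + m / (B + 1) + m % (B + 1) : ℕ) : ℝ) * B := by gcongr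
    _ ≤ _ := by exact_mod_cast one_add_sum_add_div_add_mod_mul_le hB m

end IsBlockCycle

/-- Consider the sequence of angles advancing by step `1/k` in the `k`-th block
(`l_{k−1} < n ≤ l_k`), starting from `0` at `n = l_{k−1}`, so the `k`-th block repeats
the cycle `0, 1/k, …, (k−1)/k` exactly `k^{k−1}` times.  For `δ ∈ (0,1/2)` and a target
angle `φ`, the asymptotic density of `{n : ρ(a_n, φ) < δ}` exists and equals `2δ`. -/
theorem stmt_16 (a : ℕ → ℝ)
    (ha : ∀ k : ℕ, 1 ≤ k → ∀ n : ℕ, blockEnd (k - 1) < n → n ≤ blockEnd k →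
      a n = (((n - blockEnd (k - 1)) % k : ℕ) : ℝ) / k)
    (δ : ℝ) (hδ : δ ∈ Set.Ioo (0:ℝ) (1/2)) (φ : ℝ) (hφ : φ ∈ Set.Ico (0:ℝ) 1) :
    Filter.Tendsto
      (fun N : ℕ =>
        (((Finset.range (N + 1)).filter (fun n => circleDist (a n) φ < δ)).card : ℝ) / N)
      Filter.atTop (nhds (2 * δ)) := by
  rw [Metric.tendsto_atTop]
  intro ε hε
  obtain ⟨B₀, hB₀⟩ := exists_nat_gt (5 / ε)
  refine ⟨blockEnd (B₀ + 2) + 1, fun N hN => ?_⟩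
  obtain ⟨B, h1, h2⟩ := exists_blockEnd_lt_le (N := N) (by omega)
  have hB : B₀ + 2 ≤ B := Nat.lt_succ_iff.1 <|
    blockEnd_strictMono.lt_iff_lt.1 (by omega : blockEnd (B₀ + 2) < blockEnd (B + 1))
  have hbound := IsBlockCycle.abs_count_sub_mul_le ha hδ.1 hδ.2.le hφ.1 hφ.2 (by omega) h1 h2
  have hN : (0 : ℝ) < N := by exact_mod_cast (show 0 < N by omega)
  have hB0 : (0 : ℝ) < B := by exact_mod_cast (show 0 < B by omega)
  have hεB : 5 < B * ε :=
    (div_lt_iff₀ hε).1 (hB₀.trans_le (by exact_mod_cast (show B₀ ≤ B by omega)))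
  rw [← Nat.count_eq_card_filter_range, Real.dist_eq,
    show ∀ c : ℝ, c / N - 2 * δ = (c - 2 * δ * N) / N from fun c => by field_simp,
    abs_div, abs_of_pos hN, div_lt_iff₀ hN]
  calc _ ≤ 5 * (N : ℝ) / B := by rw [le_div_iff₀ hB0]; exact hbound
    _ < ε * N := by rw [div_lt_iff₀ hB0]; nlinarith
end
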